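/- arXiv:1102.5226 — 8 statements merged into one kernel-verified Lean document; each statement's English description precedes it below -/
import Mathlib

section
/- Let q be a complex number that is not a root of unity and q ≠ 1 (equivalently, q^n ≠ 1 for all nonzero integers n). Suppose γ : ℤ × ℤ → ℂ is a function with finite support satisfying (1 - q^n)·γ(m-1, n) = (q^(1-n) - 1)·γ(m, n) for all integers m, n. Then γ is identically zero. -/
/-!
At `n = 1` the right-hand side of the recursion vanishes, and `1 - q ≠ 0` forces `γ (m, 1) = 0`.
For `n ≠ 1` the factor `q ^ (1 - n) - 1` is nonzero, so `γ (m, n) ≠ 0` forces `γ (m - 1, n) ≠ 0`: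
a nonzero row `γ (·, n)` would have a finite support without a least element.
-/

open Function

theorem Int.eq_zero_of_support_finite_of_ne_zero_sub_one {M : Type*} [Zero M] {f : ℤ → M}
    (hf : (support f).Finite) (hstep : ∀ m, f m ≠ 0 → f (m - 1) ≠ 0) : f = 0 := by
  by_contra hne
  obtain ⟨m, hmin⟩ := hf.exists_minimal (support_nonempty_iff.2 hne)
  have : m ≤ m - 1 := hmin.2 (hstep m hmin.1) (by omega)
  omega

theorem stmt_0 (q : ℂ) (hq : ∀ n : ℤ, n ≠ 0 → q ^ n ≠ 1)
    (γ : ℤ × ℤ → ℂ) (hfin : (Function.support γ).Finite)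
    (hrec : ∀ m n : ℤ, (1 - q ^ n) * γ (m - 1, n) = (q ^ (1 - n) - 1) * γ (m, n)) :
    γ = 0 := by
  funext ⟨m, n⟩
  rcases eq_or_ne n 1 with rfl | hn
  · have hq1 : (1 : ℂ) - q ≠ 0 := sub_ne_zero.2 (by simpa using (hq 1 one_ne_zero).symm)
    simpa [hq1] using hrec (m + 1) 1
  · have hcoef : q ^ (1 - n) - 1 ≠ 0 := sub_ne_zero.2 (hq (1 - n) (by omega))
    have hrow : (fun k ↦ γ (k, n)) = 0 := by
      refine Int.eq_zero_of_support_finite_of_ne_zero_sub_one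
        (hfin.preimage (Prod.mk_left_injective n).injOn) fun k hk ↦ ?_
      exact right_ne_zero_of_mul (hrec k n ▸ mul_ne_zero hcoef hk)
    exact congrFun hrow m
end

section
/- Let q be a complex number with q^n ≠ 1 for all nonzero integers n. Suppose η : ℤ × ℤ → ℂ has finite support and satisfies (q^m - 1)·η(m, n-1) = (1 - q^(1-m))·η(m, n) for all integers m, n. Then η is identically zero. -/
/-!
Fix a row `m`. For `m = 0` the recursion reads `0 = (1 - q) η(0, n)`, so the row vanishes.
For `m ≠ 0` the coefficient `q ^ m - 1` of `η(m, n - 1)` is nonzero, so a nonzero entry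
`η(m, n)` forces `η(m, n + 1) ≠ 0`, and then all later entries of the row are nonzero,
contradicting finiteness of the support.
-/

lemma eq_zero_of_support_finite_of_mul_sub_one_eq_mul {M₀ : Type*} [MulZeroClass M₀]
    [NoZeroDivisors M₀] {a b : M₀} (ha : a ≠ 0) {f : ℤ → M₀} (hf : f.support.Finite)
    (h : ∀ n, a * f (n - 1) = b * f n) : f = 0 := by
  by_contra hne
  obtain ⟨n, hn⟩ := Function.ne_iff.mp hne
  have hforward : ∀ k : ℕ, f (n + k) ≠ 0 := by
    intro k
    induction k with
    | zero => simpa using hn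
    | succ k ih =>
      intro hk
      have hstep := h (n + (k + 1 : ℕ))
      rw [hk, mul_zero, Nat.cast_succ, ← add_assoc, add_sub_cancel_right] at hstep
      exact mul_ne_zero ha ih hstep
  exact Set.infinite_of_injective_forall_mem
    ((add_right_injective n).comp Nat.cast_injective) hforward hf

theorem stmt_1 (q : ℂ) (hq : ∀ n : ℤ, n ≠ 0 → q ^ n ≠ 1)
    (η : ℤ × ℤ → ℂ) (hfin : (Function.support η).Finite)
    (hrec : ∀ m n : ℤ, (q ^ m - 1) * η (m, n - 1) = (1 - q ^ (1 - m)) * η (m, n)) :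
    η = 0 := by
  ext ⟨m, n⟩
  rcases eq_or_ne m 0 with rfl | hm
  · have hq1 : 1 - q ≠ 0 := sub_ne_zero.mpr (by simpa using (hq 1 one_ne_zero).symm)
    have h0 := hrec 0 n
    simp only [zpow_zero, sub_self, zero_mul, sub_zero, zpow_one] at h0
    exact (mul_eq_zero.mp h0.symm).resolve_left hq1
  · have hrow : (fun n => η (m, n)) = 0 :=
      eq_zero_of_support_finite_of_mul_sub_one_eq_mul (sub_ne_zero.mpr (hq m hm))
        (hfin.preimage (Prod.mk_right_injective m).injOn) (hrec m)
    exact congrFun hrow n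
end

section
/- Let q be a nonzero complex number with q^n ≠ 1 for all nonzero integers n. Suppose g : ℤ × ℤ → ℂ has finite support and satisfies q^(-2m)·g(m, n) = q^m·g(m, n-2) + (q^(-m) - 1)·g(m, n-1) for all integers m, n. Then g is identically zero. -/
/-! Each row `n ↦ g (m, n)` is a finitely supported solution of a second-order recurrence whose
leading coefficient `q ^ (-2 * m)` never vanishes. At the least `n` in its support the recurrence
reads `q ^ (-2 * m) * g (m, n) = 0`, so the support must be empty. -/

open Function

theorem Int.eq_zero_of_support_finite_of_forall_lt_eq_zero {M : Type*} [Zero M] {f : ℤ → M}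
    (hf : (support f).Finite) (h : ∀ n, (∀ k < n, f k = 0) → f n = 0) : f = 0 := by
  by_contra hne
  obtain ⟨n, hn, hmin⟩ := Set.exists_min_image (support f) id hf (support_nonempty_iff.mpr hne)
  refine hn (h n fun k hk => ?_)
  by_contra hk0
  exact absurd (hmin k hk0) (not_le.mpr hk)

theorem Int.eq_zero_of_support_finite_of_recurrence {R : Type*} [Semiring R] [NoZeroDivisors R]
    {f a b c : ℤ → R} (hf : (support f).Finite) (hc : ∀ n, c n ≠ 0)
    (hrec : ∀ n, c n * f n = a n * f (n - 2) + b n * f (n - 1)) : f = 0 :=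
  eq_zero_of_support_finite_of_forall_lt_eq_zero hf fun n hlt => by
    have h := hrec n
    rw [hlt (n - 2) (by omega), hlt (n - 1) (by omega), mul_zero, mul_zero, add_zero] at h
    exact (mul_eq_zero.mp h).resolve_left (hc n)

theorem Set.Finite.support_comp_prodMk {α β M : Type*} [Zero M] {g : α × β → M}
    (hg : (support g).Finite) (a : α) : (support fun b => g (a, b)).Finite :=
  hg.preimage (Prod.mk_right_injective a).injOn

theorem stmt_2_general (q : ℂ) (hq0 : q ≠ 0)
    (g : ℤ × ℤ → ℂ) (hfin : (Function.support g).Finite)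
    (hrec : ∀ m n : ℤ,
      q ^ (-2 * m) * g (m, n) = q ^ m * g (m, n - 2) + (q ^ (-m) - 1) * g (m, n - 1)) :
    g = 0 := by
  funext ⟨m, n⟩
  have hrow : (fun k => g (m, k)) = 0 :=
    Int.eq_zero_of_support_finite_of_recurrence (hfin.support_comp_prodMk m)
      (fun _ => zpow_ne_zero _ hq0) (hrec m)
  exact congrFun hrow n

theorem stmt_2 (q : ℂ) (hq0 : q ≠ 0) (hq : ∀ n : ℤ, n ≠ 0 → q ^ n ≠ 1)
    (g : ℤ × ℤ → ℂ) (hfin : (Function.support g).Finite)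
    (hrec : ∀ m n : ℤ,
      q ^ (-2 * m) * g (m, n) = q ^ m * g (m, n - 2) + (q ^ (-m) - 1) * g (m, n - 1)) :
    g = 0 :=
  stmt_2_general q hq0 g hfin hrec
end

section
/- Let q be a nonzero complex number with q^n ≠ 1 for all nonzero integers n. Suppose h : ℤ × ℤ → ℂ has finite support and satisfies q^(-2n)·h(m, n) = q^n·h(m-2, n) + (q^(-n) - 1)·h(m-1, n) for all integers m, n. Then h is identically zero. -/
/-! Fix `n`. Since `q ^ (-2n) ≠ 0`, the recursion determines `h (m, n)` from `h (m - 2, n)` and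
`h (m - 1, n)`. The slice `m ↦ h (m, n)` has finite support; if it were nonzero, at the least `m`
of its support both predecessors vanish, forcing `h (m, n) = 0`. -/

open Function

theorem Int.eq_zero_of_bddBelow_support_of_step {M : Type*} [Zero M] {f : ℤ → M}
    (hbdd : BddBelow (support f)) (hstep : ∀ m, f (m - 2) = 0 → f (m - 1) = 0 → f m = 0) :
    f = 0 := by
  by_contra hf
  obtain ⟨b, hb⟩ := hbdd
  obtain ⟨m, hm, hleast⟩ := Int.exists_least_of_bdd (P := (· ∈ support f)) ⟨b, fun z hz => hb hz⟩
    (support_nonempty_iff.mpr hf)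
  have below : ∀ k, k < m → f k = 0 := fun k hk =>
    notMem_support.mp fun hk' => (hleast k hk').not_gt hk
  exact hm (hstep m (below _ (by omega)) (below _ (by omega)))

theorem eq_zero_of_mul_eq_mul_add_mul {R : Type*} [NonUnitalNonAssocSemiring R] [NoZeroDivisors R]
    {a b c x y z : R} (ha : a ≠ 0) (hrec : a * x = b * y + c * z) (hy : y = 0) (hz : z = 0) :
    x = 0 := by
  rw [hy, hz, mul_zero, mul_zero, add_zero] at hrec
  exact (mul_eq_zero.mp hrec).resolve_left ha

theorem stmt_3_general (q : ℂ) (hq0 : q ≠ 0)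
    (h : ℤ × ℤ → ℂ) (hfin : (Function.support h).Finite)
    (hrec : ∀ m n : ℤ,
      q ^ (-2 * n) * h (m, n) = q ^ n * h (m - 2, n) + (q ^ (-n) - 1) * h (m - 1, n)) :
    h = 0 := by
  funext ⟨m, n⟩
  have hslice : (fun k => h (k, n)) = 0 := by
    refine Int.eq_zero_of_bddBelow_support_of_step ?_ fun k => ?_
    · exact (hfin.preimage (Prod.mk_left_injective n).injOn).bddBelow
    · exact eq_zero_of_mul_eq_mul_add_mul (zpow_ne_zero (-2 * n) hq0) (hrec k n)
  exact congrFun hslice m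

theorem stmt_3 (q : ℂ) (hq0 : q ≠ 0) (hq : ∀ n : ℤ, n ≠ 0 → q ^ n ≠ 1)
    (h : ℤ × ℤ → ℂ) (hfin : (Function.support h).Finite)
    (hrec : ∀ m n : ℤ,
      q ^ (-2 * n) * h (m, n) = q ^ n * h (m - 2, n) + (q ^ (-n) - 1) * h (m - 1, n)) :
    h = 0 :=
  stmt_3_general q hq0 h hfin hrec
end

section
/- Let q be a nonzero complex number with q^n ≠ 1 for all nonzero integers n. Suppose G : ℤ × ℤ → ℂ has finite support and satisfies (q^m - q^n)·G(m-1, n-1) + (q^(-m) - q^(-1-n))·G(m, n) = 0 for all integers m, n, together with G(m, m) = 0 and G(m, m-1) = 0 for all nonzero integers m. Then G is identically zero. -/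
/-!
The recurrence reads `(q^m - q^n) G(m-1, n-1) = (q^(-1-n) - q^(-m)) G(m, n)`, and since `q` is not a
root of unity the coefficient on the right vanishes only on the line `m = n + 1`, where instead
`G(m, n) = 0` by the recurrence at `(m + 1, n + 1)`. Hence the support of `G` is stable under
`(m, n) ↦ (m - 1, n - 1)`, so a finite support has no minimal element and must be empty.
-/

theorem zpow_sub_zpow_ne_zero {K : Type*} [DivisionRing K] {q : K} (hq0 : q ≠ 0)
    (hq : ∀ n : ℤ, n ≠ 0 → q ^ n ≠ 1) {a b : ℤ} (hab : a ≠ b) : q ^ a - q ^ b ≠ 0 := by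
  intro h
  apply hq (a - b) (sub_ne_zero.mpr hab)
  rw [zpow_sub₀ hq0, div_eq_one_iff_eq (zpow_ne_zero _ hq0)]
  exact sub_eq_zero.mp h

section Recurrence

variable {K : Type*} [DivisionRing K] {q : K} {G : ℤ × ℤ → K}

theorem apply_add_one_self_eq_zero (hq0 : q ≠ 0) (hq : ∀ n : ℤ, n ≠ 0 → q ^ n ≠ 1)
    (hrec : ∀ m n : ℤ,
      (q ^ m - q ^ n) * G (m - 1, n - 1) + (q ^ (-m) - q ^ (-1 - n)) * G (m, n) = 0)
    (n : ℤ) : G (n + 1, n) = 0 := by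
  have h := hrec (n + 2) (n + 1)
  rw [show -(n + 2) = -1 - (n + 1) by ring, sub_self, zero_mul, add_zero,
    show n + 2 - 1 = n + 1 by ring, add_sub_cancel_right] at h
  exact (mul_eq_zero.mp h).resolve_left (zpow_sub_zpow_ne_zero hq0 hq (by omega))

theorem apply_sub_one_ne_zero (hq0 : q ≠ 0) (hq : ∀ n : ℤ, n ≠ 0 → q ^ n ≠ 1)
    (hrec : ∀ m n : ℤ,
      (q ^ m - q ^ n) * G (m - 1, n - 1) + (q ^ (-m) - q ^ (-1 - n)) * G (m, n) = 0)
    {m n : ℤ} (hG : G (m, n) ≠ 0) : G (m - 1, n - 1) ≠ 0 := by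
  obtain rfl | hmn := eq_or_ne m (n + 1)
  · exact absurd (apply_add_one_self_eq_zero hq0 hq hrec n) hG
  intro hzero
  have h := hrec m n
  rw [hzero, mul_zero, zero_add] at h
  exact hG ((mul_eq_zero.mp h).resolve_left (zpow_sub_zpow_ne_zero hq0 hq (by omega)))

end Recurrence

theorem stmt_4_general (q : ℂ) (hq0 : q ≠ 0) (hq : ∀ n : ℤ, n ≠ 0 → q ^ n ≠ 1)
    (G : ℤ × ℤ → ℂ) (hfin : (Function.support G).Finite)
    (hrec : ∀ m n : ℤ,
      (q ^ m - q ^ n) * G (m - 1, n - 1) + (q ^ (-m) - q ^ (-1 - n)) * G (m, n) = 0) :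
    G = 0 := by
  by_contra hG
  obtain ⟨⟨m, n⟩, hmin⟩ := hfin.exists_minimal (Function.support_nonempty_iff.mpr hG)
  have hprev : (m - 1, n - 1) ∈ Function.support G := apply_sub_one_ne_zero hq0 hq hrec hmin.prop
  exact hmin.not_lt hprev (Prod.mk_lt_mk.mpr (.inl ⟨by omega, by omega⟩))

theorem stmt_4 (q : ℂ) (hq0 : q ≠ 0) (hq : ∀ n : ℤ, n ≠ 0 → q ^ n ≠ 1)
    (G : ℤ × ℤ → ℂ) (hfin : (Function.support G).Finite)
    (hrec : ∀ m n : ℤ,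
      (q ^ m - q ^ n) * G (m - 1, n - 1) + (q ^ (-m) - q ^ (-1 - n)) * G (m, n) = 0)
    (hdiag : ∀ m : ℤ, m ≠ 0 → G (m, m) = 0)
    (hdiag' : ∀ m : ℤ, m ≠ 0 → G (m, m - 1) = 0) :
    G = 0 :=
  stmt_4_general q hq0 hq G hfin hrec
end

section
/- Let q be a nonzero complex number with q^n ≠ 1 for all nonzero integers n. Suppose a, b : ℤ × ℤ → ℂ both have finite support and satisfy, for all integers m, n: q^m·a(m, n-1) - a(m, n) = q^(-m)·b(m, n) - b(m, n-1). If additionally for some fixed m' the set {n : b(m', n) ≠ 0} is nonempty with minimum element n₀, then a(m', n) = 0 for all n < n₀ and q^(m')·a(m', n) = -b(m', n) for all integers n. -/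
/-!
Along the row `m'`, the recursion says exactly that `c n := q^m' a(m', n) + b(m', n)` satisfies
`c (n + 1) = q^m' c n`. A nonzero sequence with a nonzero ratio never returns to zero, so it
cannot have finite support; hence `c = 0`, and below `n₀` the vanishing of `b` forces that of `a`.
-/

open Function

theorem eq_zero_of_support_finite_of_add_one_eq_mul {M₀ : Type*} [MulZeroClass M₀]
    [NoZeroDivisors M₀] {c : ℤ → M₀} {r : M₀} (hr : r ≠ 0) (hc : ∀ n, c (n + 1) = r * c n)
    (hfin : (support c).Finite) : c = 0 := by
  by_contra hne
  obtain ⟨n, hn⟩ := support_nonempty_iff.2 hne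
  have hIci : Set.Ici n ⊆ support c := by
    intro m hm
    induction m, hm using Int.leInduction with
    | base => exact hn
    | succ m _ ih => rw [mem_support, hc]; exact mul_ne_zero hr ih
  exact Set.Ici_infinite n (hfin.subset hIci)

theorem stmt_5_general (q : ℂ) (hq0 : q ≠ 0)
    (a b : ℤ × ℤ → ℂ)
    (hfa : (Function.support a).Finite) (hfb : (Function.support b).Finite)
    (hrec : ∀ m n : ℤ,
      q ^ m * a (m, n - 1) - a (m, n) = q ^ (-m) * b (m, n) - b (m, n - 1))
    (m' n₀ : ℤ) (hleast : IsLeast {n : ℤ | b (m', n) ≠ 0} n₀) :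
    (∀ n : ℤ, n < n₀ → a (m', n) = 0) ∧ (∀ n : ℤ, q ^ m' * a (m', n) = -b (m', n)) := by
  have hqm : q ^ m' ≠ 0 := zpow_ne_zero _ hq0
  have hrow_fin : ∀ f : ℤ × ℤ → ℂ, (support f).Finite → (support fun n => f (m', n)).Finite :=
    fun f hf => hf.preimage (Prod.mk_right_injective m').injOn
  set c : ℤ → ℂ := fun n => q ^ m' * a (m', n) + b (m', n)
  have hc_step : ∀ n, c (n + 1) = q ^ m' * c n := by
    intro n
    have h := hrec m' (n + 1)
    rw [add_sub_cancel_right, zpow_neg] at h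
    have hinv : q ^ m' * (q ^ m')⁻¹ = 1 := mul_inv_cancel₀ hqm
    linear_combination (-(q ^ m')) * h - b (m', n + 1) * hinv
  have hc_fin : (support c).Finite :=
    (((hrow_fin a hfa).subset (support_mul_subset_right _ _)).union (hrow_fin b hfb)).subset
      (support_add _ _)
  have hc_zero := eq_zero_of_support_finite_of_add_one_eq_mul hqm hc_step hc_fin
  have hab : ∀ n, q ^ m' * a (m', n) = -b (m', n) :=
    fun n => eq_neg_of_add_eq_zero_left (congrFun hc_zero n)
  refine ⟨fun n hn => ?_, hab⟩
  have hb : b (m', n) = 0 := not_not.1 fun h => (hleast.2 h).not_gt hn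
  simpa [hb, hqm] using hab n

theorem stmt_5 (q : ℂ) (hq0 : q ≠ 0) (hq : ∀ n : ℤ, n ≠ 0 → q ^ n ≠ 1)
    (a b : ℤ × ℤ → ℂ)
    (hfa : (Function.support a).Finite) (hfb : (Function.support b).Finite)
    (hrec : ∀ m n : ℤ,
      q ^ m * a (m, n - 1) - a (m, n) = q ^ (-m) * b (m, n) - b (m, n - 1))
    (m' n₀ : ℤ) (hleast : IsLeast {n : ℤ | b (m', n) ≠ 0} n₀) :
    (∀ n : ℤ, n < n₀ → a (m', n) = 0) ∧ (∀ n : ℤ, q ^ m' * a (m', n) = -b (m', n)) :=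
  stmt_5_general q hq0 a b hfa hfb hrec m' n₀ hleast
end

section
/- Let S be a Lie algebra over a field of characteristic zero, let V be an S-module, and let m be an element of an abelian group Γ grading both S and V (i.e. S = ⊕_{γ∈Γ} S_γ, V = ⊕_{γ∈Γ} V_γ with S_γ · V_δ ⊆ V_{γ+δ}). Suppose ρ ∈ S_0 acts on each homogeneous component V_γ and S_γ as multiplication by a scalar ρ(γ), depending additively on γ, and ρ(m) ≠ 0. Then every derivation D : S → V which is homogeneous of degree m (i.e. D(S_γ) ⊆ V_{γ+m}) is inner: D(x) = x · v for v = (1/ρ(m))·D(ρ). -/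
/-!
Applying the Leibniz rule to `⁅ρ, x⁆` for `x` of degree `γ` gives
`c γ • D x = c (γ + m) • D x - ⁅x, D ρ⁆`, because `D x` has degree `γ + m`; additivity of `c`
turns this into `⁅x, D ρ⁆ = c m • D x`. So `D` agrees with the inner derivation of
`(c m)⁻¹ • D ρ` on every homogeneous component, and these span `L`.
-/

namespace LieDerivation

section CommRing

variable {R L M : Type*} [CommRing R] [LieRing L] [LieAlgebra R L]
  [AddCommGroup M] [Module R M] [LieRingModule L M] [LieModule R L M]

theorem lie_apply_eq_smul_of_lie_eq_smul (D : LieDerivation R L M) {ρ x : L} {a b : R}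
    (hx : ⁅ρ, x⁆ = a • x) (hDx : ⁅ρ, D x⁆ = (a + b) • D x) : ⁅x, D ρ⁆ = b • D x := by
  have h := D.apply_lie_eq_sub ρ x
  rw [hx, map_smul, hDx, add_smul] at h
  linear_combination (norm := module) h

theorem ext_of_iSup_eq_top {ι : Type*} {D₁ D₂ : LieDerivation R L M} (S : ι → Submodule R L)
    (hS : ⨆ i, S i = ⊤) (h : ∀ i, ∀ x ∈ S i, D₁ x = D₂ x) : D₁ = D₂ :=
  ext <| LinearMap.congr_fun <|
    LinearMap.ext_on (s := ⋃ i, (S i : Set L)) (f := (D₁ : L →ₗ[R] M)) (g := D₂)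
      (by rw [← Submodule.iSup_eq_span, hS]) fun x hx =>
        (Set.mem_iUnion.mp hx).elim fun i hi => h i x hi

end CommRing

theorem apply_eq_lie_inv_smul_of_lie_eq_smul {k L M : Type*} [Field k] [LieRing L]
    [LieAlgebra k L] [AddCommGroup M] [Module k M] [LieRingModule L M] [LieModule k L M]
    (D : LieDerivation k L M) {ρ x : L} {a b : k} (hb : b ≠ 0)
    (hx : ⁅ρ, x⁆ = a • x) (hDx : ⁅ρ, D x⁆ = (a + b) • D x) : D x = ⁅x, b⁻¹ • D ρ⁆ := by
  rw [lie_smul, D.lie_apply_eq_smul_of_lie_eq_smul hx hDx, inv_smul_smul₀ hb]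

end LieDerivation

theorem stmt_6_general {k L M Γ : Type*} [Field k]
    [LieRing L] [LieAlgebra k L]
    [AddCommGroup M] [Module k M] [LieRingModule L M] [LieModule k L M]
    [AddCommGroup Γ]
    (S : Γ → Submodule k L) (V : Γ → Submodule k M)
    (hsup : (⨆ γ : Γ, S γ) = ⊤)
    (ρ : L)
    (c : Γ →+ k) (m : Γ) (hm : c m ≠ 0)
    (hρS : ∀ γ : Γ, ∀ x ∈ S γ, ⁅ρ, x⁆ = c γ • x)
    (hρV : ∀ γ : Γ, ∀ w ∈ V γ, ⁅ρ, w⁆ = c γ • w)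
    (D : L →ₗ[k] M)
    (hD : ∀ x y : L, D ⁅x, y⁆ = ⁅x, D y⁆ - ⁅y, D x⁆)
    (hdeg : ∀ γ : Γ, ∀ x ∈ S γ, D x ∈ V (γ + m)) :
    ∀ x : L, D x = ⁅x, (c m)⁻¹ • D ρ⁆ := by
  let D' : LieDerivation k L M := ⟨D, hD⟩
  have hD' : D' = LieDerivation.inner k L M ((c m)⁻¹ • D ρ) :=
    LieDerivation.ext_of_iSup_eq_top S hsup fun γ x hx =>
      D'.apply_eq_lie_inv_smul_of_lie_eq_smul hm (hρS γ x hx) <| by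
        rw [← map_add]
        exact hρV (γ + m) (D x) (hdeg γ x hx)
  intro x
  exact LieDerivation.congr_fun hD' x

/-- Abstract version of Lemma 3.4: a homogeneous derivation of nonzero degree
into a graded module is inner. -/
theorem stmt_6 {k L M Γ : Type*} [Field k] [CharZero k]
    [LieRing L] [LieAlgebra k L]
    [AddCommGroup M] [Module k M] [LieRingModule L M] [LieModule k L M]
    [AddCommGroup Γ]
    (S : Γ → Submodule k L) (V : Γ → Submodule k M)
    (hsup : (⨆ γ : Γ, S γ) = ⊤)
    (hact : ∀ γ δ : Γ, ∀ x ∈ S γ, ∀ w ∈ V δ, ⁅x, w⁆ ∈ V (γ + δ))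
    (ρ : L) (hρ : ρ ∈ S 0)
    (c : Γ →+ k) (m : Γ) (hm : c m ≠ 0)
    (hρS : ∀ γ : Γ, ∀ x ∈ S γ, ⁅ρ, x⁆ = c γ • x)
    (hρV : ∀ γ : Γ, ∀ w ∈ V γ, ⁅ρ, w⁆ = c γ • w)
    (D : L →ₗ[k] M)
    (hD : ∀ x y : L, D ⁅x, y⁆ = ⁅x, D y⁆ - ⁅y, D x⁆)
    (hdeg : ∀ γ : Γ, ∀ x ∈ S γ, D x ∈ V (γ + m)) :
    ∀ x : L, D x = ⁅x, (c m)⁻¹ • D ρ⁆ :=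
  stmt_6_general S V hsup ρ c m hm hρS hρV D hD hdeg
end

section
/- Let S be a Lie algebra over ℂ, graded by ℤ²: S = ⊕_{m∈ℤ²} S_m, with elements d₁, d₂ ∈ S_0 such that [dᵢ, x] = mᵢ·x for x ∈ S_{(m₁,m₂)}. Let V be a ℤ²-graded S-module with dᵢ acting on V_m by mᵢ. Suppose D : S → V is a derivation such that each homogeneous component D_m is inner, say D_m = (v_m)_inn with v_m ∈ V_m. Then the set {m ∈ ℤ² \ {0} : v_m ≠ 0} is finite. -/
/-- Lemma 3.8: if a derivation D decomposes as the (pointwise finite) sum of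
inner derivations (v_m)_inn with v_m in the degree-m part of a ℤ²-graded
module, then only finitely many of the v_m with m ≠ 0 are nonzero. -/
theorem stmt_13 {L M : Type*} [LieRing L] [LieAlgebra ℂ L]
    [AddCommGroup M] [Module ℂ M] [LieRingModule L M] [LieModule ℂ L M]
    (V : ℤ × ℤ → Submodule ℂ M) (d₁ d₂ : L)
    (hd₁ : ∀ m : ℤ × ℤ, ∀ w ∈ V m, ⁅d₁, w⁆ = (m.1 : ℂ) • w)
    (hd₂ : ∀ m : ℤ × ℤ, ∀ w ∈ V m, ⁅d₂, w⁆ = (m.2 : ℂ) • w)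
    (v : ℤ × ℤ → M) (hv : ∀ m : ℤ × ℤ, v m ∈ V m)
    (D : L →ₗ[ℂ] M)
    (hD : ∀ x y : L, D ⁅x, y⁆ = ⁅x, D y⁆ - ⁅y, D x⁆)
    (hfin : ∀ x : L, (Function.support fun m : ℤ × ℤ => ⁅x, v m⁆).Finite)
    (hsum : ∀ x : L, D x = ∑ᶠ m : ℤ × ℤ, ⁅x, v m⁆) :
    {m : ℤ × ℤ | m ≠ (0, 0) ∧ v m ≠ 0}.Finite := by
  apply Set.Finite.subset ((hfin d₁).union (hfin d₂))
  rintro m ⟨hm, hvm⟩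
  have h : ¬(m.1 = 0 ∧ m.2 = 0) := fun ⟨a, b⟩ => hm (Prod.ext a b)
  by_cases h1 : m.1 = 0
  · right
    have h2 : m.2 ≠ 0 := fun h2 => h ⟨h1, h2⟩
    simp only [Function.mem_support, hd₂ m (v m) (hv m)]
    exact smul_ne_zero (by exact_mod_cast h2) hvm
  · left
    simp only [Function.mem_support, hd₁ m (v m) (hv m)]
    exact smul_ne_zero (by exact_mod_cast h1) hvm
end
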